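/- arXiv:1612.06072 — 2 statements merged into one kernel-verified Lean document; each statement's English description precedes it below -/
import Mathlib

section
/- Let α = (j₁,j₂,…) be a sequence of integers greater than 1 and set m_i = j₁·j₂·⋯·j_i for each i. Let F = {X; f_λ | λ ∈ Λ} be an IFS on a compact metric space X. Then F_σ is topologically conjugate to the adding machine map g_α for every σ ∈ Λ^ℕ if and only if the following three properties hold: (1) for each positive integer i there is a cover P_i of X consisting of m_i pairwise disjoint, nonempty, clopen sets which are cyclically permuted by F; (2) for each positive integer i, P_{i+1} partitions P_i (each element of P_i is the union of those elements of P_{i+1} contained in it); (3) whenever V₁ ⊇ V₂ ⊇ V₃ ⊇ … is a nested sequence with V_i ∈ P_i for each i, the intersection ⋂_{i=1}^∞ V_i consists of a single point. -/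
open Set Function Topology

/-- `F_{σ_n} = f_{λ_n} ∘ ⋯ ∘ f_{λ_1}` for `σ = (λ_1, λ_2, …)`. -/
def ifsComp {X Λ : Type*} (f : Λ → X → X) (σ : ℕ → Λ) : ℕ → X → X
  | 0 => id
  | n + 1 => f (σ n) ∘ ifsComp f σ n

/-- `F(A) = ⋃_{λ ∈ Λ} f_λ(A)`. -/
def ifsImage {X Λ : Type*} (f : Λ → X → X) (A : Set X) : Set X := ⋃ l : Λ, f l '' A

/-- `M` is an `F^n`-minimal set. -/
def IsMinimalSetIFS {X Λ : Type*} [TopologicalSpace X] (f : Λ → X → X) (n : ℕ) (M : Set X) :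
    Prop :=
  M.Nonempty ∧ IsClosed M ∧ (∀ σ : ℕ → Λ, ifsComp f σ n '' M = M) ∧
    ∀ A : Set X, A.Nonempty → A ⊂ M → ∀ σ : ℕ → Λ, ifsComp f σ n '' A ≠ A

/-- The IFS `F` is minimal: the only `F^1`-minimal set is the whole space. -/
def IFSMinimal {X Λ : Type*} [TopologicalSpace X] (f : Λ → X → X) : Prop :=
  ∀ M : Set X, IsMinimalSetIFS f 1 M ↔ M = Set.univ

/-- `x` is regularly recurrent for the IFS `F`. -/
def IFSRegularlyRecurrent {X Λ : Type*} [TopologicalSpace X] (f : Λ → X → X) (x : X) : Prop :=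
  ∀ U ∈ 𝓝 x, ∃ n : ℕ, 1 ≤ n ∧ ∀ (i : ℕ) (σ : ℕ → Λ), ifsComp f σ (n * i) x ∈ U

/-- `x` is a periodic point of the IFS `F`. -/
def IFSPeriodic {X Λ : Type*} (f : Λ → X → X) (x : X) : Prop :=
  ∃ (n : ℕ) (σ : ℕ → Λ), 1 ≤ n ∧ ifsComp f σ n x = x

/-- `NM(F)`: positive integers `n` such that some set is `F^n`-minimal but not `F^j`-minimal
for any `1 ≤ j ≤ n-1`. -/
def NMSet {X Λ : Type*} [TopologicalSpace X] (f : Λ → X → X) : Set ℕ :=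
  {n | 1 ≤ n ∧ ∃ M : Set X, IsMinimalSetIFS f n M ∧
    ∀ j : ℕ, 1 ≤ j → j < n → ¬ IsMinimalSetIFS f j M}

/-- The carry sequence when adding `(1,0,0,…)` to `r` in `Δ_α`. -/
def addCarry (α : ℕ → ℕ) (r : ∀ i, Fin (α i)) : ℕ → ℕ
  | 0 => 1
  | i + 1 => if α i ≤ (r i).val + addCarry α r i then 1 else 0

/-- The adding machine map `g_α : Δ_α → Δ_α`, `g_α(r) = r + (1,0,0,…)`. -/
def addingMachine (α : ℕ → ℕ) (r : ∀ i, Fin (α i)) : ∀ i, Fin (α i) :=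
  fun i => ⟨((r i).val + addCarry α r i) % α i, Nat.mod_lt _ (r i).pos⟩

/-!
Write `m_i = placeValue α i` and `trunc i : Δ_α → ZMod m_i` for the residue of the first `i`
digits. The adding machine acts as `+ 1` on every `trunc i`, and a point of `Δ_α` is the same
thing as a coherent sequence of residues. Both sides of the equivalence amount to a single
homeomorphism `h : X ≃ₜ Δ_α` with `h ∘ f_λ = g_α ∘ h` for every `λ`.

Given such an `h`, the cells `P_i j = {x | trunc i (h x) = j}` have properties (1)–(3).
Conversely, the index of the level-`i` cell containing a point, normalised at a base point, is a
coherent sequence of residues that grows by one under each `f_λ`, and (3) makes it a bijection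
onto `Δ_α`.

To obtain one `h` for all `λ` from the conjugacies of the theorem, let `A` conjugate the constant
sequence `λ₀` and `B` the sequence `λ, λ₀, λ₀, …`. Both conjugate `f_λ₀` to `g_α`, whose orbits
are dense, so `trunc i ∘ A - trunc i ∘ B` is constant for each `i`; as `B` also conjugates `f_λ`,
so does `A`.
-/

theorem apply_iterate_eq_add {X R : Type*} [AddMonoidWithOne R] {T : X → X} {ψ : X → R}
    (h : ∀ x, ψ (T x) = ψ x + 1) (n : ℕ) (x : X) : ψ (T^[n] x) = ψ x + n := by
  induction n with
  | zero => simp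
  | succ n ih => rw [iterate_succ_apply', h, ih, Nat.cast_succ, add_assoc]

theorem sub_eq_castHom_sub {X : Type*} {M N : ℕ} [NeZero N] (hMN : M ∣ N) {T : X → X}
    {ι : X → ZMod N} {κ : X → ZMod M} (hι : ∀ x, ι (T x) = ι x + 1)
    (hκ : ∀ x, κ (T x) = κ x + 1) (hfib : ∀ x y, ι x = ι y → κ x = κ y) (x y : X) :
    κ x - κ y = ZMod.castHom hMN _ (ι x - ι y) := by
  obtain ⟨n, hn⟩ : ∃ n : ℕ, (n : ZMod N) = ι x - ι y := ⟨_, ZMod.natCast_zmod_val _⟩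
  have hTn : ι (T^[n] y) = ι x := by rw [apply_iterate_eq_add hι, hn, add_sub_cancel]
  rw [← hn, map_natCast, ← hfib _ _ hTn, apply_iterate_eq_add hκ, add_sub_cancel_left]

theorem semiconj_ifsComp {X Y Λ : Type*} {f : Λ → X → X} {h : X → Y} {S : Y → Y}
    (hf : ∀ l, Semiconj h (f l) S) (σ : ℕ → Λ) (n : ℕ) : Semiconj h (ifsComp f σ n) S^[n] := by
  induction n with
  | zero => exact fun _ => rfl
  | succ n ih => rw [iterate_succ']; exact (hf (σ n)).comp_right ih

theorem Function.Semiconj.surjective_of_equiv {X Y : Type*} {h : X ≃ Y} {T : X → X} {S : Y → Y}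
    (hT : Semiconj h T S) (hS : Surjective S) : Surjective T := by
  intro y
  obtain ⟨r, hr⟩ := hS (h y)
  exact ⟨h.symm r, h.injective (by rw [hT, h.apply_symm_apply, hr])⟩

theorem Function.Semiconj.denseRange_iterate {X Y : Type*} [TopologicalSpace X]
    [TopologicalSpace Y] {h : X ≃ₜ Y} {T : X → X} {S : Y → Y} (hT : Semiconj h T S) {x : X}
    (hS : DenseRange fun n => S^[n] (h x)) : DenseRange fun n => T^[n] x := by
  have horbit : (fun n => T^[n] x) = h.symm ∘ fun n => S^[n] (h x) :=
    funext fun n => by simp [← (hT.iterate_right n) x]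
  rw [horbit]
  exact h.symm.surjective.denseRange.comp hS h.symm.continuous

theorem exists_iInter_ge_one_eq_singleton {X : Type*} [TopologicalSpace X] [CompactSpace X]
    {V : ℕ → Set X} (hne : ∀ i, 1 ≤ i → (V i).Nonempty) (hcl : ∀ i, 1 ≤ i → IsClosed (V i))
    (hmono : ∀ i, 1 ≤ i → V (i + 1) ⊆ V i) (hsub : (⋂ i, ⋂ (_ : 1 ≤ i), V i).Subsingleton) :
    ∃ x, (⋂ i, ⋂ (_ : 1 ≤ i), V i) = {x} := by
  have hne' : (⋂ i, ⋂ (_ : 1 ≤ i), V i).Nonempty := by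
    obtain ⟨x, hx⟩ := IsCompact.nonempty_iInter_of_sequence_nonempty_isCompact_isClosed
      (fun n => V (n + 1)) (fun n => hmono (n + 1) n.succ_pos) (fun n => hne (n + 1) n.succ_pos)
      (hcl 1 le_rfl).isCompact (fun n => hcl (n + 1) n.succ_pos)
    refine ⟨x, Set.mem_iInter₂.2 fun i hi => ?_⟩
    simpa [Nat.sub_add_cancel hi] using Set.mem_iInter.1 hx (i - 1)
  exact (hsub.eq_empty_or_singleton).resolve_left hne'.ne_empty

namespace Odometer

variable (α : ℕ → ℕ)

def placeValue (i : ℕ) : ℕ := ∏ k ∈ Finset.range i, α k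

theorem placeValue_succ (i : ℕ) : placeValue α (i + 1) = placeValue α i * α i :=
  Finset.prod_range_succ _ _

theorem placeValue_dvd_succ (i : ℕ) : placeValue α i ∣ placeValue α (i + 1) :=
  Dvd.intro _ (placeValue_succ α i).symm

theorem placeValue_dvd {k i : ℕ} (h : k ≤ i) : placeValue α k ∣ placeValue α i :=
  Finset.prod_dvd_prod_of_subset _ _ _ (Finset.range_subset_range.2 h)

variable {α}

instance [∀ i, NeZero (α i)] (i : ℕ) : NeZero (placeValue α i) :=
  ⟨Finset.prod_ne_zero_iff.2 fun k _ => NeZero.ne (α k)⟩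

instance : Subsingleton (ZMod (placeValue α 0)) :=
  inferInstanceAs (Subsingleton (ZMod 1))

def truncNat (i : ℕ) (r : ∀ i, Fin (α i)) : ℕ :=
  ∑ k ∈ Finset.range i, (r k : ℕ) * placeValue α k

theorem truncNat_succ (i : ℕ) (r : ∀ i, Fin (α i)) :
    truncNat (i + 1) r = truncNat i r + r i * placeValue α i :=
  Finset.sum_range_succ _ _

theorem truncNat_lt (i : ℕ) (r : ∀ i, Fin (α i)) : truncNat i r < placeValue α i := by
  induction i with
  | zero => exact Nat.one_pos
  | succ i ih =>
    have hr : (r i : ℕ) + 1 ≤ α i := (r i).isLt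
    calc truncNat (i + 1) r < placeValue α i + r i * placeValue α i := by
          rw [truncNat_succ]; omega
      _ = ((r i : ℕ) + 1) * placeValue α i := by ring
      _ ≤ placeValue α (i + 1) := by
          rw [placeValue_succ, mul_comm]; exact Nat.mul_le_mul_left _ hr

theorem truncNat_succ_div (i : ℕ) (r : ∀ i, Fin (α i)) :
    truncNat (i + 1) r / placeValue α i = r i := by
  have hpos : 0 < placeValue α i := (Nat.zero_le _).trans_lt (truncNat_lt i r)
  rw [truncNat_succ, Nat.add_mul_div_right _ _ hpos, Nat.div_eq_of_lt (truncNat_lt i r), zero_add]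

theorem truncNat_mod {k i : ℕ} (h : k ≤ i) (r : ∀ i, Fin (α i)) :
    truncNat i r % placeValue α k = truncNat k r := by
  induction i, h using Nat.le_induction with
  | base => exact Nat.mod_eq_of_lt (truncNat_lt k r)
  | succ i hki ih =>
    rw [← Nat.mod_mod_of_dvd _ (placeValue_dvd α hki), truncNat_succ, Nat.add_mul_mod_self_right,
      Nat.mod_eq_of_lt (truncNat_lt i r), ih]

theorem addCarry_le_one (r : ∀ i, Fin (α i)) (i : ℕ) : addCarry α r i ≤ 1 := by
  cases i with
  | zero => exact le_rfl
  | succ i => unfold addCarry; split <;> omega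

theorem addingMachine_apply_add_mul_addCarry (r : ∀ i, Fin (α i)) (i : ℕ) :
    (addingMachine α r i : ℕ) + α i * addCarry α r (i + 1) = r i + addCarry α r i := by
  have hc := addCarry_le_one r i
  have hr := (r i).isLt
  simp only [addingMachine, addCarry]
  split_ifs with h
  · rw [Nat.mod_eq_sub_mod h, Nat.mod_eq_of_lt (by omega)]; omega
  · rw [Nat.mod_eq_of_lt (by omega)]; omega

theorem truncNat_addingMachine_add (i : ℕ) (r : ∀ i, Fin (α i)) :
    truncNat i (addingMachine α r) + addCarry α r i * placeValue α i = truncNat i r + 1 := by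
  induction i with
  | zero => rfl
  | succ i ih =>
    have hdigit := addingMachine_apply_add_mul_addCarry r i
    rw [truncNat_succ, truncNat_succ, placeValue_succ]
    linear_combination (placeValue α i) * hdigit + ih

def trunc (i : ℕ) (r : ∀ i, Fin (α i)) : ZMod (placeValue α i) := truncNat i r

theorem continuous_trunc (i : ℕ) : Continuous (trunc (α := α) i) := by
  unfold trunc truncNat
  fun_prop

theorem val_trunc (i : ℕ) (r : ∀ i, Fin (α i)) : (trunc i r).val = truncNat i r :=
  ZMod.val_cast_of_lt (truncNat_lt i r)

theorem castHom_trunc_succ (i : ℕ) (r : ∀ i, Fin (α i)) :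
    ZMod.castHom (placeValue_dvd_succ α i) _ (trunc (i + 1) r) = trunc i r := by
  rw [trunc, trunc, map_natCast, truncNat_succ, Nat.cast_add, Nat.cast_mul, ZMod.natCast_self,
    mul_zero, add_zero]

theorem trunc_addingMachine (i : ℕ) (r : ∀ i, Fin (α i)) :
    trunc i (addingMachine α r) = trunc i r + 1 := by
  have h := congrArg (Nat.cast : ℕ → ZMod (placeValue α i)) (truncNat_addingMachine_add i r)
  rwa [Nat.cast_add, Nat.cast_mul, ZMod.natCast_self, mul_zero, add_zero, Nat.cast_add,
    Nat.cast_one] at h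

theorem trunc_iterate_addingMachine (i n : ℕ) (r : ∀ i, Fin (α i)) :
    trunc i ((addingMachine α)^[n] r) = trunc i r + n :=
  apply_iterate_eq_add (trunc_addingMachine i) n r

variable (α) in
/-- Coherent sequences are the points of the inverse limit of the rings `ZMod (placeValue α i)`;
`trunc` and `ofTrunc` identify this inverse limit with `Δ_α`. -/
def IsCoherent (c : ∀ i, ZMod (placeValue α i)) : Prop :=
  ∀ i, ZMod.castHom (placeValue_dvd_succ α i) _ (c (i + 1)) = c i

theorem isCoherent_trunc (r : ∀ i, Fin (α i)) : IsCoherent α fun i => trunc i r :=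
  fun i => castHom_trunc_succ i r

theorem apply_eq_of_trunc_eq {i k : ℕ} {r s : ∀ i, Fin (α i)} (h : trunc i r = trunc i s)
    (hk : k < i) : r k = s k := by
  have hnat : truncNat i r = truncNat i s := by rw [← val_trunc, h, val_trunc]
  ext
  rw [← truncNat_succ_div, ← truncNat_succ_div, ← truncNat_mod hk, ← truncNat_mod hk, hnat]

theorem eq_of_trunc_eq {r s : ∀ i, Fin (α i)} (h : ∀ i, trunc i r = trunc i s) : r = s :=
  funext fun k => apply_eq_of_trunc_eq (h (k + 1)) k.lt_succ_self

theorem exists_trunc_eq_subset {r : ∀ i, Fin (α i)} {U : Set (∀ i, Fin (α i))} (hU : U ∈ 𝓝 r) :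
    ∃ i, {s | trunc i s = trunc i r} ⊆ U := by
  rw [nhds_pi, Filter.mem_pi'] at hU
  obtain ⟨I, t, ht, hsub⟩ := hU
  refine ⟨I.sup id + 1, fun s hs => hsub fun k hk => ?_⟩
  have hk' : k < I.sup id + 1 := Nat.lt_succ_of_le (Finset.le_sup (f := id) hk)
  rw [apply_eq_of_trunc_eq hs hk']
  exact mem_of_mem_nhds (ht k)

section NeZero

variable [∀ i, NeZero (α i)]

def digit (k : ℕ) (a : ZMod (placeValue α (k + 1))) : Fin (α k) :=
  ⟨a.val / placeValue α k, Nat.div_lt_of_lt_mul ((placeValue_succ α k) ▸ a.val_lt)⟩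

def ofTrunc (c : ∀ i, ZMod (placeValue α i)) : ∀ i, Fin (α i) :=
  fun k => digit k (c (k + 1))

theorem continuous_ofTrunc : Continuous (ofTrunc (α := α)) :=
  continuous_pi fun k => continuous_of_discreteTopology.comp (continuous_apply (k + 1))

theorem truncNat_ofTrunc {c : ∀ i, ZMod (placeValue α i)} (hc : IsCoherent α c) (i : ℕ) :
    truncNat i (ofTrunc c) = (c i).val := by
  induction i with
  | zero => rw [Subsingleton.elim (c 0) 0, ZMod.val_zero]; rfl
  | succ i ih =>
    rw [truncNat_succ, ih, ← hc i, ZMod.castHom_apply, ZMod.cast_eq_val, ZMod.val_natCast]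
    exact Nat.mod_add_div' _ _

theorem trunc_ofTrunc {c : ∀ i, ZMod (placeValue α i)} (hc : IsCoherent α c) (i : ℕ) :
    trunc i (ofTrunc c) = c i := by
  rw [trunc, truncNat_ofTrunc hc, ZMod.natCast_zmod_val]

theorem trunc_surjective (i : ℕ) : Surjective (trunc (α := α) i) := fun c =>
  ⟨(addingMachine α)^[c.val] 0, by
    rw [trunc_iterate_addingMachine, ZMod.natCast_zmod_val, add_eq_right]
    simp [trunc, truncNat]⟩

theorem addingMachine_surjective : Surjective (addingMachine α) := by
  intro s
  have hc : IsCoherent α fun i => trunc i s - 1 := fun i => by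
    rw [map_sub, map_one, castHom_trunc_succ]
  exact ⟨ofTrunc _, eq_of_trunc_eq fun i => by
    rw [trunc_addingMachine, trunc_ofTrunc hc, sub_add_cancel]⟩

theorem denseRange_iterate_addingMachine (r : ∀ i, Fin (α i)) :
    DenseRange fun n => (addingMachine α)^[n] r := by
  intro s
  rw [mem_closure_iff_nhds]
  intro U hU
  obtain ⟨i, hi⟩ := exists_trunc_eq_subset hU
  refine ⟨_, hi ?_, (trunc i s - trunc i r).val, rfl⟩
  show trunc i _ = _
  rw [trunc_iterate_addingMachine, ZMod.natCast_zmod_val, add_sub_cancel]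

end NeZero

end Odometer

def IsCyclicPartition {X Λ : Type*} [TopologicalSpace X] (f : Λ → X → X) (N : ℕ)
    (Q : ℕ → Set X) : Prop :=
  (∀ j, j < N → (Q j).Nonempty ∧ IsClopen (Q j)) ∧
    (∀ j, j < N → ∀ k, k < N → j ≠ k → Disjoint (Q j) (Q k)) ∧
    (⋃ j ∈ Finset.range N, Q j) = Set.univ ∧
    (∀ (l : Λ) (j : ℕ), j < N → f l '' Q j = Q ((j + 1) % N))

theorem isCyclicPartition_fibers {X Λ : Type*} [TopologicalSpace X] {f : Λ → X → X} {N : ℕ}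
    [NeZero N] {ψ : X → ZMod N} (hψ : Continuous ψ) (hψs : Surjective ψ)
    (hf : ∀ l, Surjective (f l)) (hψf : ∀ l x, ψ (f l x) = ψ x + 1) :
    IsCyclicPartition f N fun j => ψ ⁻¹' {(j : ZMod N)} := by
  refine ⟨fun j _ => ⟨hψs j, (isClopen_discrete _).preimage hψ⟩, ?_, ?_, ?_⟩
  · intro j hj k hk hjk
    refine Set.disjoint_left.2 fun x (hxj : ψ x = j) (hxk : ψ x = k) => hjk ?_
    rw [hxj, ZMod.natCast_eq_natCast_iff', Nat.mod_eq_of_lt hj, Nat.mod_eq_of_lt hk] at hxk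
    exact hxk
  · refine Set.eq_univ_of_forall fun x => Set.mem_iUnion₂.2 ⟨(ψ x).val, ?_, ?_⟩
    · exact Finset.mem_range.2 (ZMod.val_lt _)
    · exact (ZMod.natCast_zmod_val _).symm
  · intro l j _
    ext y
    simp only [Set.mem_image, Set.mem_preimage, Set.mem_singleton_iff, ZMod.natCast_mod,
      Nat.cast_succ]
    constructor
    · rintro ⟨x, hx, rfl⟩
      rw [hψf, hx]
    · intro hy
      obtain ⟨x, rfl⟩ := hf l y
      exact ⟨x, add_right_cancel ((hψf l x).symm.trans hy), rfl⟩

noncomputable def cellIndex {X : Type*} (N : ℕ) (Q : ℕ → Set X) (x : X) : ZMod N :=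
  (Classical.epsilon fun j => j < N ∧ x ∈ Q j : ℕ)

namespace IsCyclicPartition

variable {X Λ : Type*} [TopologicalSpace X] {f : Λ → X → X} {N : ℕ} {Q : ℕ → Set X}

theorem exists_mem (hQ : IsCyclicPartition f N Q) (x : X) : ∃ j, j < N ∧ x ∈ Q j := by
  have hx : x ∈ ⋃ j ∈ Finset.range N, Q j := by rw [hQ.2.2.1]; trivial
  simpa using hx

theorem eq_of_mem (hQ : IsCyclicPartition f N Q) {j k : ℕ} (hj : j < N) (hk : k < N) {x : X}
    (hxj : x ∈ Q j) (hxk : x ∈ Q k) : j = k :=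
  by_contra fun hjk => Set.disjoint_left.1 (hQ.2.1 j hj k hk hjk) hxj hxk

theorem cellIndex_eq_iff (hQ : IsCyclicPartition f N Q) {j : ℕ} (hj : j < N) {x : X} :
    cellIndex N Q x = j ↔ x ∈ Q j := by
  obtain ⟨hlt, hmem⟩ := Classical.epsilon_spec (hQ.exists_mem x)
  rw [cellIndex, ZMod.natCast_eq_natCast_iff', Nat.mod_eq_of_lt hlt, Nat.mod_eq_of_lt hj]
  exact ⟨fun h => h ▸ hmem, fun h => hQ.eq_of_mem hlt hj hmem h⟩

theorem cellIndex_apply (hQ : IsCyclicPartition f N Q) (l : Λ) (x : X) :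
    cellIndex N Q (f l x) = cellIndex N Q x + 1 := by
  obtain ⟨j, hj, hx⟩ := hQ.exists_mem x
  rw [(hQ.cellIndex_eq_iff hj).2 hx, ← Nat.cast_succ, ← ZMod.natCast_mod,
    hQ.cellIndex_eq_iff (Nat.mod_lt _ (by omega)), ← hQ.2.2.2 l j hj]
  exact Set.mem_image_of_mem _ hx

theorem continuous_cellIndex (hQ : IsCyclicPartition f N Q) : Continuous (cellIndex N Q) := by
  rw [← IsLocallyConstant.iff_continuous, IsLocallyConstant.iff_exists_open]
  intro x
  obtain ⟨j, hj, hx⟩ := hQ.exists_mem x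
  refine ⟨Q j, (hQ.1 j hj).2.isOpen, hx, fun y hy => ?_⟩
  rw [(hQ.cellIndex_eq_iff hj).2 hy, (hQ.cellIndex_eq_iff hj).2 hx]

theorem cellIndex_eq_of_refines {M : ℕ} {Q' : ℕ → Set X} (hQ : IsCyclicPartition f M Q)
    (hQ' : IsCyclicPartition f N Q')
    (hrefine : ∀ k, k < M → Q k = ⋃ j ∈ {j : ℕ | j < N ∧ Q' j ⊆ Q k}, Q' j) {x y : X}
    (hxy : cellIndex N Q' x = cellIndex N Q' y) : cellIndex M Q x = cellIndex M Q y := by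
  obtain ⟨k, hk, hxk⟩ := hQ.exists_mem x
  rw [hrefine k hk, Set.mem_iUnion₂] at hxk
  obtain ⟨j, ⟨hj, hjk⟩, hxj⟩ := hxk
  have hyj : y ∈ Q' j := (hQ'.cellIndex_eq_iff hj).1 (hxy ▸ (hQ'.cellIndex_eq_iff hj).2 hxj)
  rw [(hQ.cellIndex_eq_iff hk).2 (hjk hxj), (hQ.cellIndex_eq_iff hk).2 (hjk hyj)]

end IsCyclicPartition

namespace Odometer

variable {X Λ : Type*} {α : ℕ → ℕ}

theorem existsUnique_forall_eq_of_nested {P : ℕ → ℕ → Set X}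
    (φ : ∀ i, X → ZMod (placeValue α i)) (hcoh : ∀ x, IsCoherent α fun i => φ i x)
    (hcells : ∀ i, 1 ≤ i → ∀ c, ∃ j, j < placeValue α i ∧ {x | φ i x = c} = P i j)
    (h3 : ∀ V : ℕ → Set X, (∀ i, 1 ≤ i → ∃ j, j < placeValue α i ∧ V i = P i j) →
      (∀ i, 1 ≤ i → V (i + 1) ⊆ V i) → ∃ x : X, (⋂ i, ⋂ (_ : 1 ≤ i), V i) = {x})
    {c : ∀ i, ZMod (placeValue α i)} (hc : IsCoherent α c) : ∃! x, ∀ i, φ i x = c i := by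
  have hnested : ∀ i, 1 ≤ i → {x | φ (i + 1) x = c (i + 1)} ⊆ {x | φ i x = c i} :=
    fun i _ x (hx : φ (i + 1) x = _) => by
      show φ i x = c i
      rw [← hc i, ← hx]
      exact (hcoh x i).symm
  obtain ⟨x, hx⟩ := h3 (fun i => {x | φ i x = c i}) (fun i hi => hcells i hi (c i)) hnested
  have hmem : ∀ y, (∀ i, φ i y = c i) ↔ y ∈ ⋂ i, ⋂ (_ : 1 ≤ i), {x | φ i x = c i} := by
    intro y
    rw [Set.mem_iInter₂]
    refine ⟨fun hy i _ => hy i, fun hy i => ?_⟩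
    rcases Nat.eq_zero_or_pos i with rfl | hi
    · exact Subsingleton.elim _ _
    · exact hy i hi
  refine ⟨x, (hmem x).2 (hx ▸ rfl), fun y hy => ?_⟩
  simpa [hx] using (hmem y).1 hy

variable [TopologicalSpace X]

theorem trunc_sub_trunc_eq {T : X → X} {A B : X → ∀ i, Fin (α i)} (hA : Continuous A)
    (hB : Continuous B) (hAT : Semiconj A T (addingMachine α))
    (hBT : Semiconj B T (addingMachine α)) {x₀ : X} (hx₀ : DenseRange fun n => T^[n] x₀)
    (i : ℕ) (y : X) : trunc i (A y) - trunc i (B y) = trunc i (A x₀) - trunc i (B x₀) := by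
  set D : X → ZMod (placeValue α i) := fun y => trunc i (A y) - trunc i (B y)
  have hD : Continuous D := ((continuous_trunc i).comp hA).sub ((continuous_trunc i).comp hB)
  have hDT : ∀ y, D (T y) = D y := fun y => by
    simp only [D, hAT y, hBT y, trunc_addingMachine, add_sub_add_right_eq_sub]
  refine hx₀.induction_on (p := fun y => D y = D x₀) y (isClosed_eq hD continuous_const) ?_
  intro n
  induction n with
  | zero => rfl
  | succ n ih => rw [iterate_succ_apply', hDT, ih]

variable [∀ i, NeZero (α i)]

theorem exists_homeomorph_semiconj_of_forall_conj [Nonempty Λ] {f : Λ → X → X}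
    (H : ∀ σ : ℕ → Λ, ∃ h : X ≃ₜ (∀ i, Fin (α i)),
        ∀ n : ℕ, 1 ≤ n → (addingMachine α)^[n] ∘ h = h ∘ ifsComp f σ n) :
    ∃ h : X ≃ₜ (∀ i, Fin (α i)), ∀ l, Semiconj h (f l) (addingMachine α) := by
  obtain ⟨l₀⟩ := ‹Nonempty Λ›
  have conj_two : ∀ σ : ℕ → Λ, ∃ h : X ≃ₜ (∀ i, Fin (α i)),
      Semiconj h (f (σ 0)) (addingMachine α) ∧
        ∀ x, h (f (σ 1) (f (σ 0) x)) = addingMachine α (addingMachine α (h x)) := fun σ => by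
    obtain ⟨h, hh⟩ := H σ
    exact ⟨h, fun x => (congrFun (hh 1 le_rfl) x).symm,
      fun x => (congrFun (hh 2 one_le_two) x).symm⟩
  obtain ⟨A, hA, -⟩ := conj_two fun _ => l₀
  refine ⟨A, fun l x => ?_⟩
  obtain ⟨B, hBl, hBl₀l⟩ := conj_two fun k => if k = 0 then l else l₀
  simp only [if_pos, one_ne_zero, if_false] at hBl hBl₀l
  have hBl₀ : Semiconj B (f l₀) (addingMachine α) := by
    intro y
    obtain ⟨z, rfl⟩ := hBl.surjective_of_equiv (h := B.toEquiv) addingMachine_surjective y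
    rw [hBl₀l, hBl]
  have hrigid := trunc_sub_trunc_eq A.continuous B.continuous hA hBl₀
    (hA.denseRange_iterate (denseRange_iterate_addingMachine (A x)))
  refine eq_of_trunc_eq fun i => ?_
  have hfl := hrigid i (f l x)
  rw [hBl, trunc_addingMachine] at hfl
  rw [trunc_addingMachine]
  linear_combination hfl

variable [CompactSpace X]

theorem exists_partitions_of_semiconj {f : Λ → X → X} (h : X ≃ₜ (∀ i, Fin (α i)))
    (hf : ∀ l, Semiconj h (f l) (addingMachine α)) :
    ∃ P : ℕ → ℕ → Set X,
      (∀ i, 1 ≤ i → IsCyclicPartition f (placeValue α i) (P i)) ∧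
      (∀ i, 1 ≤ i → ∀ k, k < placeValue α i →
        P i k = ⋃ j ∈ {j : ℕ | j < placeValue α (i + 1) ∧ P (i + 1) j ⊆ P i k}, P (i + 1) j) ∧
      (∀ V : ℕ → Set X, (∀ i, 1 ≤ i → ∃ j, j < placeValue α i ∧ V i = P i j) →
        (∀ i, 1 ≤ i → V (i + 1) ⊆ V i) →
        ∃ x : X, (⋂ i, ⋂ (_ : 1 ≤ i), V i) = {x}) := by
  set ψ : ∀ i, X → ZMod (placeValue α i) := fun i x => trunc i (h x)
  have hψ : ∀ i, Continuous (ψ i) := fun i => (continuous_trunc i).comp h.continuous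
  have hψf : ∀ i l x, ψ i (f l x) = ψ i x + 1 := fun i l x => by
    simp only [ψ, hf l x, trunc_addingMachine]
  have hcyc : ∀ i, IsCyclicPartition f (placeValue α i) fun j => ψ i ⁻¹' {(j : ZMod _)} :=
    fun i => isCyclicPartition_fibers (hψ i) ((trunc_surjective i).comp h.surjective)
      (fun l => (hf l).surjective_of_equiv (h := h.toEquiv) addingMachine_surjective) (hψf i)
  refine ⟨fun i j => ψ i ⁻¹' {(j : ZMod _)}, fun i _ => hcyc i, ?_, ?_⟩
  · intro i _ k _
    apply subset_antisymm
    · intro x (hx : ψ i x = k)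
      refine Set.mem_iUnion₂.2 ⟨(ψ (i + 1) x).val,
        ⟨ZMod.val_lt _, fun y (hy : ψ (i + 1) y = _) => ?_⟩, (ZMod.natCast_zmod_val _).symm⟩
      rw [ZMod.natCast_zmod_val] at hy
      show ψ i y = k
      rw [← hx]
      show trunc i (h y) = trunc i (h x)
      rw [← castHom_trunc_succ, ← castHom_trunc_succ i (h x)]
      exact congrArg _ hy
    · exact Set.iUnion₂_subset fun j hj => hj.2
  · intro V hV hVmono
    have hcell : ∀ i, 1 ≤ i → ∃ j, j < placeValue α i ∧ V i = ψ i ⁻¹' {(j : ZMod _)} := hV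
    choose! j hj hVj using hcell
    refine exists_iInter_ge_one_eq_singleton (fun i hi => hVj i hi ▸ ((hcyc i).1 _ (hj i hi)).1)
      (fun i hi => hVj i hi ▸ ((hcyc i).1 _ (hj i hi)).2.isClosed) hVmono fun x hx y hy => ?_
    rw [Set.mem_iInter₂] at hx hy
    refine h.injective (eq_of_trunc_eq fun i => ?_)
    rcases Nat.eq_zero_or_pos i with rfl | hi
    · exact Subsingleton.elim _ _
    · have hxi := hx i hi
      have hyi := hy i hi
      rw [hVj i hi] at hxi hyi
      exact hxi.trans hyi.symm

theorem exists_homeomorph_trunc_eq (φ : ∀ i, X → ZMod (placeValue α i))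
    (hφ : ∀ i, Continuous (φ i)) (hcoh : ∀ x, IsCoherent α fun i => φ i x)
    (hbij : ∀ c, IsCoherent α c → ∃! x, ∀ i, φ i x = c i) :
    ∃ h : X ≃ₜ (∀ i, Fin (α i)), ∀ i x, trunc i (h x) = φ i x := by
  set F : X → ∀ i, Fin (α i) := fun x => ofTrunc fun i => φ i x
  have hF : ∀ i x, trunc i (F x) = φ i x := fun i x => trunc_ofTrunc (hcoh x) i
  have hinj : Injective F := fun x y hxy =>
    (hbij _ (hcoh x)).unique (fun _ => rfl) fun i => by rw [← hF, ← hxy, hF]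
  have hsurj : Surjective F := fun r => by
    obtain ⟨x, hx, -⟩ := hbij _ (isCoherent_trunc r)
    exact ⟨x, eq_of_trunc_eq fun i => by rw [hF, hx]⟩
  exact ⟨(continuous_ofTrunc.comp (continuous_pi hφ)).homeoOfEquivCompactToT2
    (f := Equiv.ofBijective F ⟨hinj, hsurj⟩), hF⟩

theorem exists_homeomorph_semiconj_of_partitions [Nonempty Λ] {f : Λ → X → X}
    (P : ℕ → ℕ → Set X) (h1 : ∀ i, 1 ≤ i → IsCyclicPartition f (placeValue α i) (P i))
    (h2 : ∀ i, 1 ≤ i → ∀ k, k < placeValue α i →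
      P i k = ⋃ j ∈ {j : ℕ | j < placeValue α (i + 1) ∧ P (i + 1) j ⊆ P i k}, P (i + 1) j)
    (h3 : ∀ V : ℕ → Set X, (∀ i, 1 ≤ i → ∃ j, j < placeValue α i ∧ V i = P i j) →
      (∀ i, 1 ≤ i → V (i + 1) ⊆ V i) → ∃ x : X, (⋂ i, ⋂ (_ : 1 ≤ i), V i) = {x}) :
    ∃ h : X ≃ₜ (∀ i, Fin (α i)), ∀ l, Semiconj h (f l) (addingMachine α) := by
  obtain ⟨l₀⟩ := ‹Nonempty Λ›
  obtain ⟨x₀, -⟩ := ((h1 1 le_rfl).1 0 (NeZero.pos _)).1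
  set ι : ∀ i, X → ZMod (placeValue α i) := fun i => cellIndex (placeValue α i) (P i)
  -- Normalising the cell indices at `x₀` is what makes consecutive levels coherent.
  set φ : ∀ i, X → ZMod (placeValue α i) := fun i x => ι i x - ι i x₀
  have hφ : ∀ i, Continuous (φ i) := fun i => by
    rcases Nat.eq_zero_or_pos i with rfl | hi
    · exact continuous_of_const fun _ _ => Subsingleton.elim _ _
    · exact (h1 i hi).continuous_cellIndex.sub continuous_const
  have hφf : ∀ i l x, φ i (f l x) = φ i x + 1 := fun i l x => by
    rcases Nat.eq_zero_or_pos i with rfl | hi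
    · exact Subsingleton.elim _ _
    · simp only [φ, ι, (h1 i hi).cellIndex_apply]
      ring
  have hcoh : ∀ x, IsCoherent α fun i => φ i x := fun x i => by
    rcases Nat.eq_zero_or_pos i with rfl | hi
    · exact Subsingleton.elim _ _
    · exact (sub_eq_castHom_sub _ ((h1 (i + 1) (by omega)).cellIndex_apply l₀)
        ((h1 i hi).cellIndex_apply l₀)
        (fun x y => (h1 i hi).cellIndex_eq_of_refines (h1 (i + 1) (by omega)) (h2 i hi))
        x x₀).symm
  have hcells : ∀ i, 1 ≤ i → ∀ c, ∃ j, j < placeValue α i ∧ {x | φ i x = c} = P i j :=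
    fun i hi c => ⟨(c + ι i x₀).val, ZMod.val_lt _, Set.ext fun x => by
      rw [← (h1 i hi).cellIndex_eq_iff (ZMod.val_lt _), ZMod.natCast_zmod_val]
      exact sub_eq_iff_eq_add⟩
  obtain ⟨h, hh⟩ := exists_homeomorph_trunc_eq φ hφ hcoh
    (fun c hc => existsUnique_forall_eq_of_nested φ hcoh hcells h3 hc)
  exact ⟨h, fun l x => eq_of_trunc_eq fun i => by rw [trunc_addingMachine, hh, hh, hφf]⟩

end Odometer

open Odometer in
theorem ifs_conjugate_adding_machine_iff_general {X Λ : Type*} [MetricSpace X] [CompactSpace X]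
    [Nonempty Λ] (f : Λ → X → X)
    (α : ℕ → ℕ) (hα : ∀ i, 2 ≤ α i) (m : ℕ → ℕ)
    (hm : ∀ i, m i = ∏ k ∈ Finset.range i, α k) :
    (∀ σ : ℕ → Λ, ∃ h : X ≃ₜ (∀ i, Fin (α i)),
        ∀ n : ℕ, 1 ≤ n → (addingMachine α)^[n] ∘ h = h ∘ ifsComp f σ n) ↔
      ∃ P : ℕ → ℕ → Set X,
        (∀ i, 1 ≤ i →
          (∀ j, j < m i → (P i j).Nonempty ∧ IsClopen (P i j)) ∧
          (∀ j, j < m i → ∀ k, k < m i → j ≠ k → Disjoint (P i j) (P i k)) ∧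
          (⋃ j ∈ Finset.range (m i), P i j) = Set.univ ∧
          (∀ (l : Λ) (j : ℕ), j < m i → f l '' P i j = P i ((j + 1) % m i))) ∧
        (∀ i, 1 ≤ i → ∀ k, k < m i →
          P i k = ⋃ j ∈ {j : ℕ | j < m (i + 1) ∧ P (i + 1) j ⊆ P i k}, P (i + 1) j) ∧
        (∀ V : ℕ → Set X, (∀ i, 1 ≤ i → ∃ j, j < m i ∧ V i = P i j) →
          (∀ i, 1 ≤ i → V (i + 1) ⊆ V i) →
          ∃ x : X, (⋂ i, ⋂ (_ : 1 ≤ i), V i) = {x}) := by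
  obtain rfl : m = placeValue α := funext hm
  have : ∀ i, NeZero (α i) := fun i => ⟨by have := hα i; omega⟩
  constructor
  · intro H
    obtain ⟨h, hh⟩ := exists_homeomorph_semiconj_of_forall_conj H
    exact exists_partitions_of_semiconj h hh
  · rintro ⟨P, h1, h2, h3⟩ σ
    obtain ⟨h, hh⟩ := exists_homeomorph_semiconj_of_partitions P h1 h2 h3
    exact ⟨h, fun n _ => funext fun x => (semiconj_ifsComp hh σ n x).symm⟩

/-- Theorem 3.5. -/
theorem ifs_conjugate_adding_machine_iff {X Λ : Type*} [MetricSpace X] [CompactSpace X]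
    [Finite Λ] [Nonempty Λ] (f : Λ → X → X) (hf : ∀ l : Λ, Continuous (f l))
    (α : ℕ → ℕ) (hα : ∀ i, 2 ≤ α i) (m : ℕ → ℕ)
    (hm : ∀ i, m i = ∏ k ∈ Finset.range i, α k) :
    (∀ σ : ℕ → Λ, ∃ h : X ≃ₜ (∀ i, Fin (α i)),
        ∀ n : ℕ, 1 ≤ n → (addingMachine α)^[n] ∘ h = h ∘ ifsComp f σ n) ↔
      ∃ P : ℕ → ℕ → Set X,
        (∀ i, 1 ≤ i →
          (∀ j, j < m i → (P i j).Nonempty ∧ IsClopen (P i j)) ∧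
          (∀ j, j < m i → ∀ k, k < m i → j ≠ k → Disjoint (P i j) (P i k)) ∧
          (⋃ j ∈ Finset.range (m i), P i j) = Set.univ ∧
          (∀ (l : Λ) (j : ℕ), j < m i → f l '' P i j = P i ((j + 1) % m i))) ∧
        (∀ i, 1 ≤ i → ∀ k, k < m i →
          P i k = ⋃ j ∈ {j : ℕ | j < m (i + 1) ∧ P (i + 1) j ⊆ P i k}, P (i + 1) j) ∧
        (∀ V : ℕ → Set X, (∀ i, 1 ≤ i → ∃ j, j < m i ∧ V i = P i j) →
          (∀ i, 1 ≤ i → V (i + 1) ⊆ V i) →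
          ∃ x : X, (⋂ i, ⋂ (_ : 1 ≤ i), V i) = {x}) :=
  ifs_conjugate_adding_machine_iff_general f α hα m hm
end

section
/- Let f : X → X be a continuous map of a compact metric space, let α = (j₁,j₂,…) be a sequence of integers greater than 1 with m_i = j₁·⋯·j_i, and suppose the single-map IFS {X; f} satisfies: (1) for each positive integer i there is a cover P_i of X consisting of m_i pairwise disjoint, nonempty, clopen sets cyclically permuted by f (f maps each element of P_i onto the next, cyclically); (2) P_{i+1} partitions P_i for each i; (3) every nested sequence V₁ ⊇ V₂ ⊇ … with V_i ∈ P_i has intersection a single point. Then the topological entropy of f is zero. -/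
open Set Function Topology

/-! The relation "`x` and `y` lie in the same piece of `P i`" is a clopen entourage, invariant
under `f × f` because `f` permutes the pieces. These relations decrease in `i` and, by condition
(3), intersect in the diagonal, so by compactness every entourage `U` contains one of them. An
invariant entourage `V ⊆ U` turns any finite `V`-cover into a `(U, n)`-dynamical cover for every
`n`, so the minimal cover sizes stay bounded and the entropy vanishes. -/

open Uniformity
open scoped ENNReal

namespace Dynamics

variable {X : Type*} {T : X → X} {U V : SetRel X X}

lemma subset_dynEntourage_of_mapsTo (hV : MapsTo (Prod.map T T) V V) (hVU : V ⊆ U) (n : ℕ) :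
    V ⊆ dynEntourage T U n := fun p hp ↦
  mem_dynEntourage.2 fun k _ ↦ hVU <| by
    have := hV.iterate k hp
    rwa [Prod.map_iterate] at this

theorem coverEntropy_eq_zero_of_forall_exists_invariant_entourage [UniformSpace X]
    [CompactSpace X] [Nonempty X]
    (h : ∀ U ∈ 𝓤 X, ∃ V ∈ 𝓤 X, V ⊆ U ∧ MapsTo (Prod.map T T) V V) :
    coverEntropy T univ = 0 := by
  refine le_antisymm (iSup₂_le fun U hU ↦ ?_) (coverEntropy_nonneg T univ_nonempty)
  obtain ⟨V, hV, hVU, hVT⟩ := h U hU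
  obtain ⟨s, hs⟩ :=
    exists_isDynCoverOf_of_isCompact_invariant isCompact_univ (mapsTo_univ T univ) hV 1
  have hs' : ∀ n, IsDynCoverOf T univ U n s := fun n ↦
    SetRel.IsCover.mono_entourage (subset_dynEntourage_of_mapsTo hVT hVU n)
      (by simpa [IsDynCoverOf] using hs)
  have hcard : (s.card : ℝ≥0∞) ≠ 0 := by
    simpa [Finset.nonempty_iff_ne_empty] using hs.nonempty univ_nonempty
  calc coverEntropyEntourage T univ U ≤ ExpGrowth.expGrowthSup fun _ ↦ (s.card : ℝ≥0∞) :=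
        ExpGrowth.expGrowthSup_monotone fun n ↦ by
          simpa using ENat.toENNReal_mono (hs' n).coverMincard_le_card
    _ = 0 := ExpGrowth.expGrowthSup_const hcard (by simp)

end Dynamics

section CyclicPartitions

variable {X : Type*}

lemma exists_subset_of_iInter_subset_diagonal [UniformSpace X] [CompactSpace X]
    {R : ℕ → Set (X × X)} (hR : Antitone R) (hR_closed : ∀ i, IsClosed (R i))
    (hR_diag : ⋂ i, R i ⊆ diagonal X) {U : Set (X × X)} (hU : U ∈ 𝓤 X) : ∃ i, R i ⊆ U := by
  refine exists_subset_nhds_of_isCompact' hR.directed_ge (fun i ↦ (hR_closed i).isCompact)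
    hR_closed fun p hp ↦ ?_
  obtain ⟨x, y⟩ := p
  obtain rfl : x = y := hR_diag hp
  exact nhds_le_uniformity x hU

def IsCyclicClopenPartition [TopologicalSpace X] (f : X → X) (A : ℕ → Set X) (n : ℕ) : Prop :=
  (∀ j, j < n → (A j).Nonempty ∧ IsClopen (A j)) ∧
  (∀ j, j < n → ∀ k, k < n → j ≠ k → Disjoint (A j) (A k)) ∧
  (⋃ j ∈ Finset.range n, A j) = univ ∧
  (∀ j, j < n → f '' A j = A ((j + 1) % n))

def samePiece (A : ℕ → Set X) (n : ℕ) : Set (X × X) := ⋃ j < n, A j ×ˢ A j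

lemma mem_samePiece {A : ℕ → Set X} {n : ℕ} {x y : X} :
    (x, y) ∈ samePiece A n ↔ ∃ j < n, x ∈ A j ∧ y ∈ A j := by
  simp only [samePiece, mem_iUnion₂, mem_prod, exists_prop]

namespace IsCyclicClopenPartition

variable {f : X → X} {A B : ℕ → Set X} {n n' : ℕ}

section

variable [TopologicalSpace X]

lemma exists_mem (hA : IsCyclicClopenPartition f A n) (x : X) : ∃ j < n, x ∈ A j := by
  have hx : x ∈ ⋃ j ∈ Finset.range n, A j := hA.2.2.1 ▸ mem_univ x
  simpa using hx

lemma eq_of_mem (hA : IsCyclicClopenPartition f A n) {j k : ℕ} (hj : j < n) (hk : k < n) {x : X}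
    (hxj : x ∈ A j) (hxk : x ∈ A k) : j = k := by
  by_contra hjk
  exact (hA.2.1 j hj k hk hjk).ne_of_mem hxj hxk rfl

lemma mapsTo_samePiece (hA : IsCyclicClopenPartition f A n) :
    MapsTo (Prod.map f f) (samePiece A n) (samePiece A n) := by
  rintro ⟨x, y⟩ hxy
  obtain ⟨j, hj, hx, hy⟩ := mem_samePiece.1 hxy
  refine mem_samePiece.2 ⟨(j + 1) % n, Nat.mod_lt _ (by omega), ?_, ?_⟩ <;>
    rw [← hA.2.2.2 j hj] <;> exact mem_image_of_mem f ‹_›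

lemma isClosed_samePiece (hA : IsCyclicClopenPartition f A n) : IsClosed (samePiece A n) :=
  (finite_lt_nat n).isClosed_biUnion fun j hj ↦
    ((hA.1 j hj).2.isClosed).prod (hA.1 j hj).2.isClosed

lemma exists_superset (hA : IsCyclicClopenPartition f A n) (hB : IsCyclicClopenPartition f B n')
    (hAB : ∀ k, k < n → A k = ⋃ j ∈ {j : ℕ | j < n' ∧ B j ⊆ A k}, B j)
    {j : ℕ} (hj : j < n') {x : X} (hx : x ∈ B j) : ∃ k < n, B j ⊆ A k := by
  obtain ⟨k, hk, hxk⟩ := hA.exists_mem x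
  rw [hAB k hk] at hxk
  simp only [mem_iUnion, mem_ofPred_eq, exists_prop] at hxk
  obtain ⟨j', ⟨hj', hj'k⟩, hxj'⟩ := hxk
  exact ⟨k, hk, hB.eq_of_mem hj hj' hx hxj' ▸ hj'k⟩

lemma samePiece_subset (hA : IsCyclicClopenPartition f A n) (hB : IsCyclicClopenPartition f B n')
    (hAB : ∀ k, k < n → A k = ⋃ j ∈ {j : ℕ | j < n' ∧ B j ⊆ A k}, B j) :
    samePiece B n' ⊆ samePiece A n := by
  rintro ⟨x, y⟩ hxy
  obtain ⟨j, hj, hx, hy⟩ := mem_samePiece.1 hxy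
  obtain ⟨k, hk, hjk⟩ := hA.exists_superset hB hAB hj hx
  exact mem_samePiece.2 ⟨k, hk, hjk hx, hjk hy⟩

end

lemma samePiece_mem_uniformity [UniformSpace X] [CompactSpace X]
    (hA : IsCyclicClopenPartition f A n) : samePiece A n ∈ 𝓤 X := by
  rw [← nhdsSet_diagonal_eq_uniformity]
  have hopen : IsOpen (samePiece A n) :=
    isOpen_biUnion fun j hj ↦ ((hA.1 j hj).2.isOpen).prod (hA.1 j hj).2.isOpen
  refine hopen.mem_nhdsSet.2 ?_
  rintro ⟨x, y⟩ (rfl : x = y)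
  obtain ⟨j, hj, hx⟩ := hA.exists_mem x
  exact mem_samePiece.2 ⟨j, hj, hx, hx⟩

end IsCyclicClopenPartition

theorem iInter_samePiece_subset_diagonal [TopologicalSpace X] {f : X → X} {m : ℕ → ℕ}
    {P : ℕ → ℕ → Set X} (hP : ∀ i, 1 ≤ i → IsCyclicClopenPartition f (P i) (m i))
    (hrefine : ∀ i, 1 ≤ i → ∀ k, k < m i →
      P i k = ⋃ j ∈ {j : ℕ | j < m (i + 1) ∧ P (i + 1) j ⊆ P i k}, P (i + 1) j)
    (hsingleton : ∀ V : ℕ → Set X, (∀ i, 1 ≤ i → ∃ j, j < m i ∧ V i = P i j) →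
      (∀ i, 1 ≤ i → V (i + 1) ⊆ V i) →
      ∃ x : X, (⋂ i, ⋂ (_ : 1 ≤ i), V i) = {x}) :
    ⋂ i, samePiece (P (i + 1)) (m (i + 1)) ⊆ diagonal X := by
  rintro ⟨x, y⟩ hxy
  have hpiece : ∀ i, ∃ j, 1 ≤ i → j < m i ∧ x ∈ P i j ∧ y ∈ P i j := by
    intro i
    by_cases hi : 1 ≤ i
    · obtain ⟨k, rfl⟩ := Nat.exists_eq_add_of_le' hi
      obtain ⟨j, hj⟩ := mem_samePiece.1 (mem_iInter.1 hxy k)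
      exact ⟨j, fun _ ↦ hj⟩
    · exact ⟨0, fun h ↦ absurd h hi⟩
  choose j hj using hpiece
  have hnested : ∀ i, 1 ≤ i → P (i + 1) (j (i + 1)) ⊆ P i (j i) := by
    intro i hi
    obtain ⟨hjlt, hx, -⟩ := hj (i + 1) (by omega)
    obtain ⟨k, hk, hsub⟩ :=
      (hP i hi).exists_superset (hP (i + 1) (by omega)) (hrefine i hi) hjlt hx
    rwa [(hP i hi).eq_of_mem hk (hj i hi).1 (hsub hx) (hj i hi).2.1] at hsub
  obtain ⟨z, hz⟩ := hsingleton (fun i ↦ P i (j i)) (fun i hi ↦ ⟨j i, (hj i hi).1, rfl⟩) hnested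
  have hmem : ∀ w, (∀ i, 1 ≤ i → w ∈ P i (j i)) → w = z := by
    intro w hw
    have hw' : w ∈ ⋂ i, ⋂ (_ : 1 ≤ i), P i (j i) := mem_iInter₂.2 hw
    rwa [hz] at hw'
  exact (hmem x fun i hi ↦ (hj i hi).2.1).trans (hmem y fun i hi ↦ (hj i hi).2.2).symm

end CyclicPartitions

theorem adding_machine_structure_zero_entropy_general {X : Type*} [MetricSpace X] [CompactSpace X]
    (f : X → X)
    (α : ℕ → ℕ) (hα : ∀ i, 2 ≤ α i) (m : ℕ → ℕ)
    (hm : ∀ i, m i = ∏ k ∈ Finset.range i, α k)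
    (P : ℕ → ℕ → Set X)
    (h1 : ∀ i, 1 ≤ i →
      (∀ j, j < m i → (P i j).Nonempty ∧ IsClopen (P i j)) ∧
      (∀ j, j < m i → ∀ k, k < m i → j ≠ k → Disjoint (P i j) (P i k)) ∧
      (⋃ j ∈ Finset.range (m i), P i j) = Set.univ ∧
      (∀ j, j < m i → f '' P i j = P i ((j + 1) % m i)))
    (h2 : ∀ i, 1 ≤ i → ∀ k, k < m i →
      P i k = ⋃ j ∈ {j : ℕ | j < m (i + 1) ∧ P (i + 1) j ⊆ P i k}, P (i + 1) j)
    (h3 : ∀ V : ℕ → Set X, (∀ i, 1 ≤ i → ∃ j, j < m i ∧ V i = P i j) →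
      (∀ i, 1 ≤ i → V (i + 1) ⊆ V i) →
      ∃ x : X, (⋂ i, ⋂ (_ : 1 ≤ i), V i) = {x}) :
    Dynamics.coverEntropy f Set.univ = 0 := by
  have hP : ∀ i, 1 ≤ i → IsCyclicClopenPartition f (P i) (m i) := h1
  have hm_one : 0 < m 1 := by
    rw [hm, Finset.prod_range_one]
    exact lt_of_lt_of_le two_pos (hα 0)
  have : Nonempty X := ⟨((hP 1 le_rfl).1 0 hm_one).1.some⟩
  have hR : Antitone fun i ↦ samePiece (P (i + 1)) (m (i + 1)) :=
    antitone_nat_of_succ_le fun i ↦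
      (hP (i + 1) (by omega)).samePiece_subset (hP (i + 2) (by omega)) (h2 (i + 1) (by omega))
  refine Dynamics.coverEntropy_eq_zero_of_forall_exists_invariant_entourage fun U hU ↦ ?_
  obtain ⟨i, hi⟩ := exists_subset_of_iInter_subset_diagonal hR
    (fun i ↦ (hP (i + 1) (by omega)).isClosed_samePiece)
    (iInter_samePiece_subset_diagonal hP h2 h3) hU
  exact ⟨_, (hP (i + 1) (by omega)).samePiece_mem_uniformity, hi,
    (hP (i + 1) (by omega)).mapsTo_samePiece⟩

/-- Remark 3.9: a single map satisfying the adding-machine structure conditions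
has zero topological entropy. -/
theorem adding_machine_structure_zero_entropy {X : Type*} [MetricSpace X] [CompactSpace X]
    (f : X → X) (hf : Continuous f)
    (α : ℕ → ℕ) (hα : ∀ i, 2 ≤ α i) (m : ℕ → ℕ)
    (hm : ∀ i, m i = ∏ k ∈ Finset.range i, α k)
    (P : ℕ → ℕ → Set X)
    (h1 : ∀ i, 1 ≤ i →
      (∀ j, j < m i → (P i j).Nonempty ∧ IsClopen (P i j)) ∧
      (∀ j, j < m i → ∀ k, k < m i → j ≠ k → Disjoint (P i j) (P i k)) ∧
      (⋃ j ∈ Finset.range (m i), P i j) = Set.univ ∧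
      (∀ j, j < m i → f '' P i j = P i ((j + 1) % m i)))
    (h2 : ∀ i, 1 ≤ i → ∀ k, k < m i →
      P i k = ⋃ j ∈ {j : ℕ | j < m (i + 1) ∧ P (i + 1) j ⊆ P i k}, P (i + 1) j)
    (h3 : ∀ V : ℕ → Set X, (∀ i, 1 ≤ i → ∃ j, j < m i ∧ V i = P i j) →
      (∀ i, 1 ≤ i → V (i + 1) ⊆ V i) →
      ∃ x : X, (⋂ i, ⋂ (_ : 1 ≤ i), V i) = {x}) :
    Dynamics.coverEntropy f Set.univ = 0 :=
  adding_machine_structure_zero_entropy_general f α hα m hm P h1 h2 h3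
end
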